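/- All homomorphisms between two finitely presented groups are recursively enumerable: let n₁, n₂ : ℕ and R₁ : Finset (FreeGroup (Fin n₁)), R₂ : Finset (FreeGroup (Fin n₂)) be finite relator sets. Then the set of n₁-tuples of words over the second alphabet that induce a homomorphism from ⟨Fin n₁; R₁⟩ to ⟨Fin n₂; R₂⟩ is recursively enumerable: REPred (fun v : List.Vector (List (Fin n₂ × Bool)) n₁ => ∀ r ∈ R₁, FreeGroup.lift (fun i : Fin n₁ => FreeGroup.mk (v.get i)) r ∈ Subgroup.normalClosure (↑R₂)). (A tuple of words (v₁, …, v_{n₁}) induces a homomorphism on the presented groups exactly when the substitution xᵢ ↦ vᵢ sends every relator of R₁ into the normal closure of R₂.) -/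

import Mathlib

/-!
An element of the free group lies in the normal closure of finitely many relators iff it is
equal, in the free group, to a product of conjugates `c r^{±1} c⁻¹` of relators. Such a product
is a finite certificate, and equality in the free group is decided by free reduction, so
membership in the normal closure is semi-decidable. Substituting the words `vᵢ` into a relator
is primitive recursive, and the finitely many conditions `r ∈ R₁` are run one after the other.
-/

section REPred

variable {α γ : Type*} [Primcodable α] [Primcodable γ]

theorem REPred.comp {p : γ → Prop} (hp : REPred p) {f : α → γ} (hf : Computable f) :
    REPred fun a => p (f a) :=
  Partrec.comp hp hf

theorem REPred.and {p q : α → Prop} (hp : REPred p) (hq : REPred q) :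
    REPred fun a => p a ∧ q a :=
  (Partrec.bind hp (Partrec.comp hq Computable.fst).to₂).of_eq fun _ =>
    Part.ext fun _ => by simp

theorem REPred.forall_mem {ι : Type*} {p : ι → α → Prop} (s : Finset ι)
    (hp : ∀ i ∈ s, REPred (p i)) : REPred fun a => ∀ i ∈ s, p i a := by
  induction s using Finset.cons_induction with
  | empty => exact (Computable.const ()).partrec.of_eq fun _ => by simp [Part.assert_pos]
  | cons i s hi ih =>
    rw [Finset.forall_mem_cons] at hp
    exact (hp.1.and (ih hp.2)).of_eq fun a => (Finset.forall_mem_cons hi fun i => p i a).symm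

theorem ComputablePred.rePred_exists {p : α → γ → Prop}
    (hp : ComputablePred fun x : α × γ => p x.1 x.2) : REPred fun a => ∃ c, p a c := by
  obtain ⟨_, hdec⟩ := hp
  have test := Computable.option_casesOn (Computable.decode.comp Computable.snd)
    (Computable.const false)
    (hdec.comp (Computable.pair (Computable.fst.comp Computable.fst) Computable.snd)).to₂
  refine (Partrec.rfind test.to₂.partrec₂).dom_re.of_eq fun a => ?_
  simp only [Nat.rfind_dom, PFun.coe_val, Part.mem_some_iff, Part.some_dom, implies_true,
    and_true]
  constructor
  · rintro ⟨n, hn⟩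
    cases h : Encodable.decode (α := γ) n with
    | none => simp [h] at hn
    | some c => exact ⟨c, by simpa [h] using hn⟩
  · rintro ⟨c, hc⟩
    exact ⟨Encodable.encode c, by simpa [Encodable.encodek] using hc⟩

end REPred

theorem List.getD_mem_normalClosure {G : Type*} [Group G] (rs : List G) (k : ℕ) :
    rs.getD k 1 ∈ Subgroup.normalClosure {r | r ∈ rs} := by
  rw [List.getD_eq_getElem?_getD]
  cases h : rs[k]? with
  | none => exact one_mem _
  | some r => exact Subgroup.subset_normalClosure (List.mem_of_getElem? h)

namespace FreeGroup

variable {α β : Type*}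

theorem mk_flatten (L : List (List (α × Bool))) : mk L.flatten = (L.map mk).prod := by
  induction L with
  | nil => rfl
  | cons w L ih => rw [List.flatten_cons, ← mul_mk, ih, List.map_cons, List.prod_cons]

theorem mk_cond_invRev (b : Bool) (w : List (α × Bool)) :
    mk (cond b w (invRev w)) = cond b (mk w) (mk w)⁻¹ := by
  cases b <;> simp [inv_mk]

def substWord (f : α → List (β × Bool)) (w : List (α × Bool)) : List (β × Bool) :=
  w.flatMap fun x => cond x.2 (f x.1) (invRev (f x.1))

theorem mk_substWord (f : α → List (β × Bool)) (w : List (α × Bool)) :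
    mk (substWord f w) = lift (fun a => mk (f a)) (mk w) := by
  simp only [substWord, List.flatMap, mk_flatten, lift_mk, List.map_map]
  congr 1
  exact List.map_congr_left fun x _ => mk_cond_invRev x.2 (f x.1)

section NormalClosure

variable [DecidableEq β] (rs : List (FreeGroup β))

/-- A certificate entry `(c, k, b)` names the relator by its index `k` in `rs`; an
out-of-range index yields the harmless relator `1`. -/
def conjRelatorWord (e : List (β × Bool) × ℕ × Bool) : List (β × Bool) :=
  e.1 ++ cond e.2.2 (rs.getD e.2.1 1).toWord (invRev (rs.getD e.2.1 1).toWord) ++ invRev e.1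

theorem mk_conjRelatorWord (c : List (β × Bool)) (k : ℕ) (b : Bool) :
    mk (conjRelatorWord rs (c, k, b)) =
      mk c * cond b (rs.getD k 1) (rs.getD k 1)⁻¹ * (mk c)⁻¹ := by
  rw [conjRelatorWord, ← mul_mk, ← mul_mk, mk_cond_invRev, mk_toWord, inv_mk]

def relatorProductWord (cert : List (List (β × Bool) × ℕ × Bool)) : List (β × Bool) :=
  cert.flatMap (conjRelatorWord rs)

theorem mk_relatorProductWord_mem (cert : List (List (β × Bool) × ℕ × Bool)) :
    mk (relatorProductWord rs cert) ∈ Subgroup.normalClosure {r | r ∈ rs} := by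
  rw [relatorProductWord, List.flatMap, mk_flatten]
  refine list_prod_mem fun x hx => ?_
  obtain ⟨⟨c, k, b⟩, -, rfl⟩ := List.mem_map.1 (List.map_map ▸ hx)
  rw [Function.comp_apply, mk_conjRelatorWord]
  refine Subgroup.normalClosure_normal.conj_mem _ ?_ _
  cases b
  · exact inv_mem (rs.getD_mem_normalClosure k)
  · exact rs.getD_mem_normalClosure k

theorem exists_mk_relatorProductWord_eq {x : FreeGroup β}
    (hx : x ∈ Subgroup.normalClosure {r | r ∈ rs}) :
    ∃ cert, mk (relatorProductWord rs cert) = x := by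
  have conj_relator (c r : FreeGroup β) (hr : r ∈ rs) (b : Bool) :
      ∃ cert, mk (relatorProductWord rs cert) = c * cond b r r⁻¹ * c⁻¹ := by
    refine ⟨[(c.toWord, rs.idxOf r, b)], ?_⟩
    rw [relatorProductWord, List.flatMap_singleton, mk_conjRelatorWord, mk_toWord,
      List.getD_eq_getElem _ _ (List.idxOf_lt_length_iff.2 hr), List.getElem_idxOf]
  induction hx using Subgroup.closure_induction'' with
  | mem x hx =>
    obtain ⟨r, hr, hconj⟩ := Group.mem_conjugatesOfSet_iff.1 hx
    obtain ⟨c, rfl⟩ := isConj_iff.1 hconj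
    exact conj_relator c r hr true
  | inv_mem x hx =>
    obtain ⟨r, hr, hconj⟩ := Group.mem_conjugatesOfSet_iff.1 hx
    obtain ⟨c, rfl⟩ := isConj_iff.1 hconj
    simpa [mul_assoc] using conj_relator c r hr false
  | one => exact ⟨[], rfl⟩
  | mul x y _ _ hx hy =>
    obtain ⟨cert₁, rfl⟩ := hx
    obtain ⟨cert₂, rfl⟩ := hy
    exact ⟨cert₁ ++ cert₂, by rw [relatorProductWord, List.flatMap_append, ← mul_mk]; rfl⟩

theorem mk_mem_normalClosure_iff (w : List (β × Bool)) :
    mk w ∈ Subgroup.normalClosure {r | r ∈ rs} ↔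
      ∃ cert, reduce (relatorProductWord rs cert) = reduce w := by
  constructor
  · intro h
    obtain ⟨cert, hcert⟩ := exists_mk_relatorProductWord_eq rs h
    exact ⟨cert, reduce.sound hcert⟩
  · rintro ⟨cert, hcert⟩
    exact reduce.exact hcert ▸ mk_relatorProductWord_mem rs cert

end NormalClosure

section Computability

variable {γ : Type*} [Primcodable α] [Primcodable β] [Primcodable γ]

theorem primrec_invRev : Primrec (invRev : List (β × Bool) → List (β × Bool)) :=
  (Primrec.list_reverse.comp (Primrec.list_map .id
    (Primrec.pair (Primrec.fst.comp Primrec.snd)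
      (Primrec.not.comp (Primrec.snd.comp Primrec.snd))).to₂)).of_eq
    fun w => by simp [invRev]

theorem primrec_reduce [DecidableEq β] :
    Primrec (reduce : List (β × Bool) → List (β × Bool)) := by
  have cancels : PrimrecRel fun (x y : β × Bool) => x.1 = y.1 ∧ x.2 = !y.2 :=
    (Primrec.eq.comp (Primrec.fst.comp Primrec.fst) (Primrec.fst.comp Primrec.snd)).and
      (Primrec.eq.comp (Primrec.snd.comp Primrec.fst)
        (Primrec.not.comp (Primrec.snd.comp Primrec.snd)))
  have step : Primrec₂ fun (_ : List (β × Bool)) (p : (β × Bool) × List (β × Bool)) =>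
      (List.casesOn p.2 [p.1] fun hd tl =>
        if p.1.1 = hd.1 ∧ p.1.2 = !hd.2 then tl else p.1 :: hd :: tl : List (β × Bool)) :=
    (Primrec.list_casesOn (Primrec.snd.comp Primrec.snd)
      (Primrec.list_cons.comp (Primrec.fst.comp Primrec.snd) (Primrec.const []))
      (Primrec.ite (cancels.comp (Primrec.fst.comp (Primrec.snd.comp Primrec.fst))
          (Primrec.fst.comp Primrec.snd))
        (Primrec.snd.comp Primrec.snd)
        (Primrec.list_cons.comp (Primrec.fst.comp (Primrec.snd.comp Primrec.fst))
          (Primrec.list_cons.comp (Primrec.fst.comp Primrec.snd)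
            (Primrec.snd.comp Primrec.snd)))).to₂).to₂
  refine (Primrec.list_foldr .id (Primrec.const []) step).of_eq fun w => ?_
  induction w with
  | nil => rfl
  | cons x w ih => rw [reduce.cons, ← ih]; rfl

theorem primrec_substWord {f : γ → α → List (β × Bool)} (hf : Primrec₂ f) :
    Primrec₂ fun c w => substWord (f c) w := by
  have hfx : Primrec fun p : (γ × List (α × Bool)) × (α × Bool) => f p.1.1 p.2.1 :=
    hf.comp (Primrec.fst.comp Primrec.fst) (Primrec.fst.comp Primrec.snd)
  exact (Primrec.list_flatMap Primrec.snd
    (Primrec.cond (Primrec.snd.comp Primrec.snd) hfx (primrec_invRev.comp hfx)).to₂).to₂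

theorem primrec_relatorProductWord [DecidableEq β] (rs : List (FreeGroup β)) :
    Primrec (relatorProductWord rs) := by
  have relator : Primrec fun e : List (β × Bool) × ℕ × Bool => (rs.getD e.2.1 1).toWord :=
    ((Primrec.list_getD []).comp (Primrec.const (rs.map toWord))
      (Primrec.fst.comp Primrec.snd)).of_eq fun _ => by rw [← toWord_one, List.getD_map]
  have conj : Primrec (conjRelatorWord rs) :=
    Primrec.list_append.comp
      (Primrec.list_append.comp Primrec.fst
        (Primrec.cond (Primrec.snd.comp Primrec.snd) relator (primrec_invRev.comp relator)))
      (primrec_invRev.comp Primrec.fst)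
  exact Primrec.list_flatMap .id (conj.comp Primrec.snd).to₂

theorem rePred_mk_mem_normalClosure [DecidableEq β] (rs : List (FreeGroup β)) :
    REPred fun w : List (β × Bool) => mk w ∈ Subgroup.normalClosure {r | r ∈ rs} := by
  refine (ComputablePred.rePred_exists ?_).of_eq fun w => (mk_mem_normalClosure_iff rs w).symm
  exact (Primrec.eq.comp (primrec_reduce.comp ((primrec_relatorProductWord rs).comp Primrec.snd))
    (primrec_reduce.comp Primrec.fst)).computablePred

end Computability

end FreeGroup

open FreeGroup in
/-- All homomorphisms between two finitely presented groups are recursively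
enumerable: the set of tuples of words inducing a homomorphism
`⟨Fin n₁; R₁⟩ → ⟨Fin n₂; R₂⟩` is recursively enumerable. -/
theorem homomorphisms_re (n₁ n₂ : ℕ) (R₁ : Finset (FreeGroup (Fin n₁)))
    (R₂ : Finset (FreeGroup (Fin n₂))) :
    REPred (fun v : List.Vector (List (Fin n₂ × Bool)) n₁ =>
      ∀ r ∈ R₁,
        FreeGroup.lift (fun i : Fin n₁ => FreeGroup.mk (v.get i)) r ∈
          Subgroup.normalClosure (↑R₂ : Set (FreeGroup (Fin n₂)))) := by
  have relators : {r | r ∈ R₂.toList} = (R₂ : Set (FreeGroup (Fin n₂))) :=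
    Set.ext fun _ => Finset.mem_toList
  refine REPred.forall_mem R₁ fun r _ => ?_
  have substitute : Computable fun v : List.Vector (List (Fin n₂ × Bool)) n₁ =>
      substWord v.get r.toWord :=
    ((primrec_substWord Primrec.vector_get).comp .id (.const r.toWord)).to_comp
  refine ((rePred_mk_mem_normalClosure R₂.toList).comp substitute).of_eq fun v => ?_
  rw [mk_substWord, mk_toWord, relators]
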